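/- Let I be an interval, K > 0, k ∈ ℕ, and f_1,…,f_k ∈ C²(I) with f_i′ ≠ 0, f_i″ of locally bounded variation, and |f_i″/f_i′| ≤ K for each i. Let A(x) := (M_{f_1}(x),…,M_{f_k}(x)). If x ∈ I^k satisfies max x − min x < min(1/K, 1), then max A(x) − min A(x) ≤ ((3 + 7e)/3)·K·(max x − min x)². -/

import Mathlib

/-- The largest entry of a vector. -/
noncomputable def vmax {k : ℕ} (x : Fin (k+1) → ℝ) : ℝ :=
  Finset.univ.sup' Finset.univ_nonempty x

/-- The smallest entry of a vector. -/
noncomputable def vmin {k : ℕ} (x : Fin (k+1) → ℝ) : ℝ :=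
  Finset.univ.inf' Finset.univ_nonempty x

/-!
Let `d = max x − min x` and `m` the arithmetic mean of `x`; each `M_{f_i}(x)` lies within
`e K d²` of `m`. Indeed, `|f''/f'| ≤ K` makes `log |f'|` `K`-Lipschitz, so on `[min x, max x]`,
where `K d ≤ 1`, `|f'|` varies at most by the factor `e`. If `c` is the minimum of `|f'|` there,
then `|f''| ≤ e K c`, and averaging the first-order Taylor expansions of `f` at `m` gives
`|f(M) − f(m)| ≤ e K c d²`, whereas the mean value theorem gives `|f(M) − f(m)| ≥ c |M − m|`.
So the spread of `A(x)` is at most `2 e K d² ≤ (3 + 7e)/3 · K d²`.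
-/

open Real Set
open scoped BigOperators

section Calculus

variable {s : Set ℝ}

theorem HasDerivWithinAt.sub_mul_id {f : ℝ → ℝ} {f' c x : ℝ} (hf : HasDerivWithinAt f f' s x) :
    HasDerivWithinAt (fun u => f u - c * u) (f' - c) s x := by
  simpa [Pi.sub_def] using hf.sub ((hasDerivWithinAt_id x s).const_mul c)

theorem Convex.le_exp_mul_of_abs_logDeriv_le (hs : Convex ℝ s) {g g' : ℝ → ℝ} {K : ℝ}
    (hg : ∀ t ∈ s, HasDerivWithinAt g (g' t) s t) (hpos : ∀ t ∈ s, 0 < g t)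
    (hK : ∀ t ∈ s, |g' t / g t| ≤ K) {x y : ℝ} (hx : x ∈ s) (hy : y ∈ s) :
    g x ≤ exp (K * |x - y|) * g y := by
  have hlog : ∀ t ∈ s, HasDerivWithinAt (fun u => log (g u)) (g' t / g t) s t :=
    fun t ht => (hg t ht).log (hpos t ht).ne'
  have hlip := hs.norm_image_sub_le_of_norm_hasDerivWithin_le hlog hK hy hx
  rw [Real.norm_eq_abs, Real.norm_eq_abs] at hlip
  calc g x = exp (log (g x)) := (exp_log (hpos x hx)).symm
    _ ≤ exp (K * |x - y| + log (g y)) :=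
        exp_le_exp.2 (by linarith [le_abs_self (log (g x) - log (g y))])
    _ = exp (K * |x - y|) * g y := by rw [exp_add, exp_log (hpos y hy)]

theorem abs_deriv_le_of_abs_logDeriv_le {g g' : ℝ → ℝ} {K a b : ℝ}
    (hg : ∀ t ∈ Icc a b, HasDerivWithinAt g (g' t) (Icc a b) t)
    (hpos : ∀ t ∈ Icc a b, 0 < g t) (hK : ∀ t ∈ Icc a b, |g' t / g t| ≤ K)
    (hKd : K * (b - a) ≤ 1) {t u : ℝ} (ht : t ∈ Icc a b) (hu : u ∈ Icc a b) :
    |g' t| ≤ K * exp 1 * g u := by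
  have hgt := hpos t ht
  have hK₀ : 0 ≤ K := (abs_nonneg _).trans (hK t ht)
  have hdist : |t - u| ≤ b - a :=
    abs_sub_le_iff.2 ⟨by linarith [ht.2, hu.1], by linarith [ht.1, hu.2]⟩
  have hgu : g t ≤ exp 1 * g u := by
    refine ((convex_Icc a b).le_exp_mul_of_abs_logDeriv_le hg hpos hK ht hu).trans ?_
    gcongr
    · exact (hpos u hu).le
    · nlinarith
  calc |g' t| = |g' t / g t| * g t := by
        rw [abs_div, abs_of_pos hgt, div_mul_cancel₀ _ hgt.ne']
    _ ≤ K * (exp 1 * g u) := mul_le_mul (hK t ht) hgu hgt.le hK₀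
    _ = K * exp 1 * g u := by ring

theorem Convex.abs_image_sub_sub_mul_le (hs : Convex ℝ s) {f f' : ℝ → ℝ} {C : ℝ}
    (hf : ∀ t ∈ s, HasDerivWithinAt f (f' t) s t) {x y : ℝ} (hx : x ∈ s) (hy : y ∈ s)
    (hC : ∀ t ∈ s, |f' t - f' y| ≤ C) :
    |f x - f y - f' y * (x - y)| ≤ C * |x - y| := by
  have h := hs.norm_image_sub_le_of_norm_hasDerivWithin_le
    (fun t ht => (hf t ht).sub_mul_id (c := f' y)) hC hy hx
  simp only [Real.norm_eq_abs] at h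
  convert h using 2
  ring

theorem Convex.mul_abs_sub_le_abs_image_sub (hs : Convex ℝ s) {f f' : ℝ → ℝ} {c : ℝ}
    (hf : ∀ t ∈ s, HasDerivWithinAt f (f' t) s t) (hc : ∀ t ∈ s, c ≤ f' t)
    {x y : ℝ} (hx : x ∈ s) (hy : y ∈ s) :
    c * |x - y| ≤ |f x - f y| := by
  have hmono : MonotoneOn (fun t => f t - c * t) s := by
    refine monotoneOn_of_hasDerivWithinAt_nonneg hs (f' := fun t => f' t - c)
      (fun t ht => ((hf t ht).sub_mul_id).continuousWithinAt) (fun t ht => ?_)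
      (fun t ht => sub_nonneg.2 (hc t (interior_subset ht)))
    exact ((hf t (interior_subset ht)).sub_mul_id).mono interior_subset
  rcases le_total x y with hxy | hyx
  · have := hmono hx hy hxy
    rw [abs_sub_comm x, abs_sub_comm (f x), abs_of_nonneg (sub_nonneg.2 hxy)]
    exact le_trans (by linarith) (le_abs_self _)
  · have := hmono hy hx hyx
    rw [abs_of_nonneg (sub_nonneg.2 hyx)]
    exact le_trans (by linarith) (le_abs_self _)

end Calculus

section QuasiArithmeticMean

variable {ι : Type*} [Fintype ι] [Nonempty ι] {f f' f'' : ℝ → ℝ} {K a b : ℝ} {x : ι → ℝ} {y : ℝ}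

theorem expect_mem_Icc (hx : ∀ j, x j ∈ Icc a b) : 𝔼 j, x j ∈ Icc a b :=
  ⟨Finset.le_expect Finset.univ_nonempty fun j _ => (hx j).1,
    Finset.expect_le Finset.univ_nonempty fun j _ => (hx j).2⟩

theorem StrictMonoOn.mem_Icc_of_apply_eq_expect {s : Set ℝ} (hf : StrictMonoOn f s)
    (hab : Icc a b ⊆ s) (hx : ∀ j, x j ∈ Icc a b) (hy : y ∈ s) (hfy : f y = 𝔼 j, f (x j)) :
    y ∈ Icc a b := by
  have hle : a ≤ b := (hx (Classical.arbitrary ι)).1.trans (hx _).2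
  have ha : a ∈ s := hab (left_mem_Icc.2 hle)
  have hb : b ∈ s := hab (right_mem_Icc.2 hle)
  have hfx : ∀ j, f (x j) ∈ Icc (f a) (f b) := fun j =>
    ⟨hf.monotoneOn ha (hab (hx j)) (hx j).1, hf.monotoneOn (hab (hx j)) hb (hx j).2⟩
  obtain ⟨hay, hyb⟩ := expect_mem_Icc hfx
  rw [← hfy] at hay hyb
  exact ⟨(hf.le_iff_le ha hy).1 hay, (hf.le_iff_le hy hb).1 hyb⟩

theorem abs_expect_apply_sub_apply_expect_le {L : ℝ}
    (hd1 : ∀ t ∈ Icc a b, HasDerivWithinAt f (f' t) (Icc a b) t)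
    (hd2 : ∀ t ∈ Icc a b, HasDerivWithinAt f' (f'' t) (Icc a b) t)
    (hL : ∀ t ∈ Icc a b, |f'' t| ≤ L) (hx : ∀ j, x j ∈ Icc a b) :
    |𝔼 j, f (x j) - f (𝔼 j, x j)| ≤ L * (b - a) ^ 2 := by
  set m := 𝔼 j, x j
  have hm : m ∈ Icc a b := expect_mem_Icc hx
  have hdist : ∀ s ∈ Icc a b, |s - m| ≤ b - a := fun s hs =>
    abs_sub_le_iff.2 ⟨by linarith [hs.2, hm.1], by linarith [hs.1, hm.2]⟩
  have hL₀ : 0 ≤ L := (abs_nonneg _).trans (hL m hm)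
  have hf'_sub : ∀ t ∈ Icc a b, |f' t - f' m| ≤ L * (b - a) := fun t ht => by
    have h := (convex_Icc a b).norm_image_sub_le_of_norm_hasDerivWithin_le hd2 hL hm ht
    rw [Real.norm_eq_abs, Real.norm_eq_abs] at h
    exact h.trans (mul_le_mul_of_nonneg_left (hdist t ht) hL₀)
  have htaylor : ∀ j, |f (x j) - f m - f' m * (x j - m)| ≤ L * (b - a) ^ 2 := fun j => by
    refine ((convex_Icc a b).abs_image_sub_sub_mul_le hd1 (hx j) hm hf'_sub).trans ?_
    rw [sq, ← mul_assoc]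
    exact mul_le_mul_of_nonneg_left (hdist _ (hx j))
      (mul_nonneg hL₀ (sub_nonneg.2 (hm.1.trans hm.2)))
  -- the first-order terms average out, since `m` is the mean of the `x j`
  have hsplit : 𝔼 j, f (x j) - f m = 𝔼 j, (f (x j) - f m - f' m * (x j - m)) := by
    rw [Finset.expect_sub_distrib, Finset.expect_sub_distrib, ← Finset.mul_expect,
      Finset.expect_sub_distrib, Fintype.expect_const, Fintype.expect_const, sub_self,
      mul_zero, sub_zero]
  rw [hsplit]
  exact (Finset.abs_expect_le _ _).trans (Finset.expect_le Finset.univ_nonempty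
    fun j _ => htaylor j)

theorem abs_sub_expect_le_of_deriv_pos_on_Icc
    (hd1 : ∀ t ∈ Icc a b, HasDerivWithinAt f (f' t) (Icc a b) t)
    (hd2 : ∀ t ∈ Icc a b, HasDerivWithinAt f' (f'' t) (Icc a b) t)
    (hpos : ∀ t ∈ Icc a b, 0 < f' t) (hbK : ∀ t ∈ Icc a b, |f'' t / f' t| ≤ K)
    (hKd : K * (b - a) ≤ 1) (hx : ∀ j, x j ∈ Icc a b) (hy : y ∈ Icc a b)
    (hfy : f y = 𝔼 j, f (x j)) :
    |y - 𝔼 j, x j| ≤ exp 1 * K * (b - a) ^ 2 := by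
  have hab : a ≤ b := hy.1.trans hy.2
  obtain ⟨u, hu, humin⟩ := isCompact_Icc.exists_isMinOn (nonempty_Icc.2 hab)
    fun t ht => (hd2 t ht).continuousWithinAt
  have hupper : |f y - f (𝔼 j, x j)| ≤ K * exp 1 * f' u * (b - a) ^ 2 := hfy ▸
    abs_expect_apply_sub_apply_expect_le hd1 hd2
      (fun t ht => abs_deriv_le_of_abs_logDeriv_le hd2 hpos hbK hKd ht hu) hx
  have hlower : f' u * |y - 𝔼 j, x j| ≤ |f y - f (𝔼 j, x j)| :=
    (convex_Icc a b).mul_abs_sub_le_abs_image_sub hd1 (fun t ht => humin ht) hy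
      (expect_mem_Icc hx)
  refine le_of_mul_le_mul_left ?_ (hpos u hu)
  calc f' u * |y - 𝔼 j, x j| ≤ K * exp 1 * f' u * (b - a) ^ 2 := hlower.trans hupper
    _ = f' u * (exp 1 * K * (b - a) ^ 2) := by ring

theorem abs_sub_expect_le_of_deriv_pos {I : Set ℝ} (hI : Convex ℝ I)
    (hd1 : ∀ t ∈ I, HasDerivWithinAt f (f' t) I t)
    (hd2 : ∀ t ∈ I, HasDerivWithinAt f' (f'' t) I t)
    (hpos : ∀ t ∈ I, 0 < f' t) (hbK : ∀ t ∈ I, |f'' t / f' t| ≤ K)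
    (hab : Icc a b ⊆ I) (hKd : K * (b - a) ≤ 1) (hx : ∀ j, x j ∈ Icc a b) (hy : y ∈ I)
    (hfy : f y = 𝔼 j, f (x j)) :
    |y - 𝔼 j, x j| ≤ exp 1 * K * (b - a) ^ 2 := by
  have hmono : StrictMonoOn f I :=
    strictMonoOn_of_hasDerivWithinAt_pos hI (fun t ht => (hd1 t ht).continuousWithinAt)
      (fun t ht => (hd1 t (interior_subset ht)).mono interior_subset)
      (fun t ht => hpos t (interior_subset ht))
  exact abs_sub_expect_le_of_deriv_pos_on_Icc (fun t ht => (hd1 t (hab ht)).mono hab)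
    (fun t ht => (hd2 t (hab ht)).mono hab) (fun t ht => hpos t (hab ht))
    (fun t ht => hbK t (hab ht)) hKd hx (hmono.mem_Icc_of_apply_eq_expect hab hx hy hfy) hfy

theorem abs_sub_expect_le_of_deriv_ne_zero {I : Set ℝ} (hI : Convex ℝ I)
    (hd1 : ∀ t ∈ I, HasDerivWithinAt f (f' t) I t)
    (hd2 : ∀ t ∈ I, HasDerivWithinAt f' (f'' t) I t)
    (hne : ∀ t ∈ I, f' t ≠ 0) (hbK : ∀ t ∈ I, |f'' t / f' t| ≤ K)
    (hab : Icc a b ⊆ I) (hKd : K * (b - a) ≤ 1) (hx : ∀ j, x j ∈ Icc a b) (hy : y ∈ I)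
    (hfy : f y = 𝔼 j, f (x j)) :
    |y - 𝔼 j, x j| ≤ exp 1 * K * (b - a) ^ 2 := by
  rcases hI.isPreconnected.mapsTo_Ioi_or_Iio (fun t ht => (hd2 t ht).continuousWithinAt) hne
    with hpos | hneg
  · exact abs_sub_expect_le_of_deriv_pos hI hd1 hd2 (fun t ht => hpos ht) hbK hab hKd hx hy hfy
  · refine abs_sub_expect_le_of_deriv_pos hI (f := fun t => -f t) (fun t ht => (hd1 t ht).neg)
      (fun t ht => (hd2 t ht).neg) (fun t ht => neg_pos.2 (hneg ht))
      (fun t ht => by simpa only [neg_div_neg_eq] using hbK t ht) hab hKd hx hy ?_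
    rw [Finset.expect_neg_distrib, hfy]

end QuasiArithmeticMean

section Spread

variable {k : ℕ}

theorem vmin_le (x : Fin (k+1) → ℝ) (i : Fin (k+1)) : vmin x ≤ x i :=
  Finset.inf'_le _ (Finset.mem_univ i)

theorem le_vmax (x : Fin (k+1) → ℝ) (i : Fin (k+1)) : x i ≤ vmax x :=
  Finset.le_sup' _ (Finset.mem_univ i)

theorem vmin_mem {s : Set ℝ} {x : Fin (k+1) → ℝ} (hx : ∀ i, x i ∈ s) : vmin x ∈ s := by
  obtain ⟨i, -, hi⟩ := Finset.exists_mem_eq_inf' Finset.univ_nonempty x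
  rw [vmin, hi]
  exact hx i

theorem vmax_mem {s : Set ℝ} {x : Fin (k+1) → ℝ} (hx : ∀ i, x i ∈ s) : vmax x ∈ s := by
  obtain ⟨i, -, hi⟩ := Finset.exists_mem_eq_sup' Finset.univ_nonempty x
  rw [vmax, hi]
  exact hx i

theorem vmax_sub_vmin_le_two_mul {x : Fin (k+1) → ℝ} {c E : ℝ} (h : ∀ i, |x i - c| ≤ E) :
    vmax x - vmin x ≤ 2 * E := by
  have hmax : vmax x ≤ c + E :=
    Finset.sup'_le _ _ fun i _ => by linarith [(abs_le.1 (h i)).2]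
  have hmin : c - E ≤ vmin x :=
    Finset.le_inf' _ _ fun i _ => by linarith [(abs_le.1 (h i)).1]
  linarith

end Spread

theorem stmt12_general (I : Set ℝ) (hI : Convex ℝ I) (K : ℝ) (hK : 0 < K) (k : ℕ)
    (f f' f'' : Fin (k+1) → ℝ → ℝ)
    (hd1 : ∀ i, ∀ t ∈ I, HasDerivWithinAt (f i) (f' i t) I t)
    (hd2 : ∀ i, ∀ t ∈ I, HasDerivWithinAt (f' i) (f'' i t) I t)
    (hne : ∀ i, ∀ t ∈ I, f' i t ≠ 0)
    (hbK : ∀ i, ∀ t ∈ I, |f'' i t / f' i t| ≤ K)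
    (x : Fin (k+1) → ℝ) (hx : ∀ i, x i ∈ I)
    (hsmall : vmax x - vmin x < min (1/K) 1)
    (M : Fin (k+1) → ℝ)
    (hM : ∀ i, M i ∈ I ∧ f i (M i) = (∑ j, f i (x j)) / (k+1)) :
    vmax M - vmin M ≤ ((3 + 7 * Real.exp 1) / 3) * K * (vmax x - vmin x)^2 := by
  set d := vmax x - vmin x
  have hKd : K * d ≤ 1 := by
    have := (lt_min_iff.1 hsmall).1
    rw [lt_div_iff₀ hK] at this
    linarith
  have hmean : ∀ i, |M i - 𝔼 j, x j| ≤ exp 1 * K * d ^ 2 := fun i =>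
    abs_sub_expect_le_of_deriv_ne_zero hI (hd1 i) (hd2 i) (hne i) (hbK i)
      (hI.ordConnected.out (vmin_mem hx) (vmax_mem hx)) hKd
      (fun j => ⟨vmin_le x j, le_vmax x j⟩) (hM i).1
      (by rw [(hM i).2, Fintype.expect_eq_sum_div_card, Fintype.card_fin, Nat.cast_add_one])
  have hKd2 : 0 ≤ K * d ^ 2 := by positivity
  calc vmax M - vmin M ≤ 2 * (exp 1 * K * d ^ 2) := vmax_sub_vmin_le_two_mul hmean
    _ ≤ ((3 + 7 * exp 1) / 3) * K * d ^ 2 := by nlinarith [exp_pos 1]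

/-- for a family `f₁,…,f_k ∈ C²(I)` with `fᵢ' ≠ 0`, `fᵢ''` of
    locally bounded variation and `|fᵢ''/fᵢ'| ≤ K`, and the mean-type mapping
    `A(x) = (M_{f₁}(x),…,M_{f_k}(x))` (whose `i`-th entry `M i` is characterized by
    `M i ∈ I`, `fᵢ (M i) = (Σⱼ fᵢ(xⱼ))/k`), if `max x − min x < min(1/K, 1)` then
    `max A(x) − min A(x) ≤ ((3 + 7e)/3)·K·(max x − min x)²`. -/
theorem stmt12 (I : Set ℝ) (hI : Convex ℝ I) (K : ℝ) (hK : 0 < K) (k : ℕ)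
    (f f' f'' : Fin (k+1) → ℝ → ℝ)
    (hd1 : ∀ i, ∀ t ∈ I, HasDerivWithinAt (f i) (f' i t) I t)
    (hd2 : ∀ i, ∀ t ∈ I, HasDerivWithinAt (f' i) (f'' i t) I t)
    (hc : ∀ i, ContinuousOn (f'' i) I)
    (hne : ∀ i, ∀ t ∈ I, f' i t ≠ 0)
    (hbv : ∀ i, LocallyBoundedVariationOn (f'' i) I)
    (hbK : ∀ i, ∀ t ∈ I, |f'' i t / f' i t| ≤ K)
    (x : Fin (k+1) → ℝ) (hx : ∀ i, x i ∈ I)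
    (hsmall : vmax x - vmin x < min (1/K) 1)
    (M : Fin (k+1) → ℝ)
    (hM : ∀ i, M i ∈ I ∧ f i (M i) = (∑ j, f i (x j)) / (k+1)) :
    vmax M - vmin M ≤ ((3 + 7 * Real.exp 1) / 3) * K * (vmax x - vmin x)^2 :=
  stmt12_general I hI K hK k f f' f'' hd1 hd2 hne hbK x hx hsmall M hM
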